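/- Suppose Σᵢ mᵢ σ(ψᵢ) ≤ V (the previous iterate is feasible) and Σᵢ mᵢ σ(ψᵢ − α gᵢ) ≥ V. Then the unique root μ* of Σᵢ mᵢ σ(ψᵢ − α gᵢ − α μ) = V satisfies 0 ≤ μ* ≤ max_i(−gᵢ). -/

import Mathlib

/-!
The constraint `μ ↦ ∑ i, m i * σ (ψ i - α * g i - α * μ)` is continuous and strictly decreasing.
It is `≥ V` at `μ = 0` by assumption, and `≤ V` at `μ = max_i (-g i)`, where every argument is at
most `ψ i`, by feasibility of the previous iterate. The intermediate value theorem does the rest.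
-/

open Finset

theorem StrictAnti.existsUnique_eq_and_forall_mem_Icc {f : ℝ → ℝ} (hf : StrictAnti f)
    (hc : Continuous f) {a b V : ℝ} (ha : V ≤ f a) (hb : f b ≤ V) :
    (∃! x, f x = V) ∧ ∀ x, f x = V → x ∈ Set.Icc a b := by
  have hab : a ≤ b := hf.le_iff_ge.mp (hb.trans ha)
  obtain ⟨x, -, hx⟩ := intermediate_value_Icc' hab hc.continuousOn ⟨hb, ha⟩
  refine ⟨⟨x, hx, fun y hy => hf.injective (hy.trans hx.symm)⟩, fun y hy => ?_⟩
  exact ⟨hf.le_iff_ge.mp (hy ▸ ha), hf.le_iff_ge.mp (hy ▸ hb)⟩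

section

variable {ι : Type*} [Fintype ι] {m : ι → ℝ} {σ : ℝ → ℝ}

theorem strictAnti_sum_mul_comp_sub_mul [Nonempty ι] (hm : ∀ i, 0 < m i) (hσ : StrictMono σ)
    (a : ι → ℝ) {α : ℝ} (hα : 0 < α) :
    StrictAnti fun μ => ∑ i, m i * σ (a i - α * μ) :=
  fun _ _ hμν => sum_lt_sum_of_nonempty univ_nonempty fun i _ =>
    mul_lt_mul_of_pos_left (hσ (by nlinarith)) (hm i)

theorem continuous_sum_mul_comp_sub_mul (hσ : Continuous σ) (a : ι → ℝ) (α : ℝ) :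
    Continuous fun μ => ∑ i, m i * σ (a i - α * μ) := by
  fun_prop

end

theorem stmt_8_general {N : ℕ} [NeZero N] (m ψ g : Fin N → ℝ) (hm : ∀ i, 0 < m i)
    (α : ℝ) (hα : 0 < α) (V : ℝ)
    (σ : ℝ → ℝ) (hσ : σ = fun x => 1 / (1 + Real.exp (-x)))
    (hfeas : ∑ i, m i * σ (ψ i) ≤ V)
    (hviol : V ≤ ∑ i, m i * σ (ψ i - α * g i)) :
    (∃! μ : ℝ, ∑ i, m i * σ (ψ i - α * g i - α * μ) = V) ∧
    (∀ μ : ℝ, (∑ i, m i * σ (ψ i - α * g i - α * μ) = V) →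
      0 ≤ μ ∧ μ ≤ Finset.univ.sup' Finset.univ_nonempty (fun i => -g i)) := by
  obtain rfl : σ = Real.sigmoid := hσ.trans (funext fun x => by simp [Real.sigmoid_def])
  set M := univ.sup' univ_nonempty fun i => -g i
  have hfeas_at_M : ∑ i, m i * Real.sigmoid (ψ i - α * g i - α * M) ≤ V := by
    refine hfeas.trans' (sum_le_sum fun i _ => ?_)
    have hgM : -g i ≤ M := le_sup' (fun i => -g i) (mem_univ i)
    exact mul_le_mul_of_nonneg_left (Real.sigmoid_strictMono.monotone (by nlinarith)) (hm i).le
  have hanti := strictAnti_sum_mul_comp_sub_mul hm Real.sigmoid_strictMono (fun i => ψ i - α * g i) hα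
  exact hanti.existsUnique_eq_and_forall_mem_Icc
    (continuous_sum_mul_comp_sub_mul continuous_sigmoid _ α) (by simpa using hviol) hfeas_at_M

/-- If `∑ i, m i * σ(ψ i) ≤ V` (feasible previous iterate) and
`∑ i, m i * σ(ψ i - α g i) ≥ V`, then the unique root `μ*` of
`∑ i, m i * σ(ψ i - α g i - α μ) = V` satisfies `0 ≤ μ* ≤ max_i (-g i)`. -/
theorem stmt_8 {N : ℕ} [NeZero N] (m ψ g : Fin N → ℝ) (hm : ∀ i, 0 < m i)
    (α : ℝ) (hα : 0 < α) (V : ℝ) (hV : V ∈ Set.Ioo (0 : ℝ) (∑ i, m i))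
    (σ : ℝ → ℝ) (hσ : σ = fun x => 1 / (1 + Real.exp (-x)))
    (hfeas : ∑ i, m i * σ (ψ i) ≤ V)
    (hviol : V ≤ ∑ i, m i * σ (ψ i - α * g i)) :
    (∃! μ : ℝ, ∑ i, m i * σ (ψ i - α * g i - α * μ) = V) ∧
    (∀ μ : ℝ, (∑ i, m i * σ (ψ i - α * g i - α * μ) = V) →
      0 ≤ μ ∧ μ ≤ Finset.univ.sup' Finset.univ_nonempty (fun i => -g i)) :=
  stmt_8_general m ψ g hm α hα V σ hσ hfeas hviol
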